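/- The And-Or path recursion identity: for Boolean variables t_0,...,t_{m-1} and an integer λ with 2λ < m - 2, the And-Or path g(t_0,...,t_{m-1}) = t_0 ∧ (t_1 ∨ (t_2 ∧ (... t_{m-1}))) satisfies g(t_0,...,t_{m-1}) = g(t_0,...,t_{2λ-1}) ∨ (t_0 ∧ t_2 ∧ t_4 ∧ ... ∧ t_{2λ-2} ∧ g(t_{2λ},...,t_{m-1})). -/

import Mathlib

mutual
  /-- And-Or path starting with AND: `gA [t₀,…,t_{m-1}] = t₀ ∧ (t₁ ∨ (t₂ ∧ …))`. -/
  def gA : List Bool → Bool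
    | [] => false
    | t :: r => t && gO r
  /-- Dual And-Or path starting with OR: `gO [t₀,…] = t₀ ∨ (t₁ ∧ …)`. -/
  def gO : List Bool → Bool
    | [] => true
    | t :: r => t || gA r
end

/-!
Unfolding two levels, `g(a, b, r…) = a ∧ (b ∨ g(r…))`. Peeling off the pair `(t_{2i}, t_{2i+1})`
therefore either makes the path succeed within the prefix, or requires `t_{2i}` and passes the
evaluation on to the rest; induction on `λ` collects the conjunction of the even-indexed variables.
-/

lemma gA_cons_cons (a b : Bool) (r : List Bool) : gA (a :: b :: r) = (a && (b || gA r)) := by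
  simp only [gA, gO]

lemma gA_map_range'_append (t : ℕ → Bool) (n s : ℕ) (r : List Bool) :
    gA ((List.range' s (2 * n)).map t ++ r) =
      (gA ((List.range' s (2 * n)).map t) ||
        (((List.range' s n 2).map t).all id && gA r)) := by
  induction n generalizing s with
  | zero => simp [gA]
  | succ n ih =>
    rw [Nat.mul_succ, List.range'_succ, List.range'_succ, List.range'_succ, Nat.add_assoc]
    simp only [List.map_cons, List.cons_append, gA_cons_cons, ih, List.all_cons, id]
    cases t s <;> simp [Bool.or_assoc]

lemma List.range_eq_range'_append_range' {k m : ℕ} (hk : k ≤ m) :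
    List.range m = List.range' 0 k ++ List.range' k (m - k) := by
  conv_lhs => rw [← Nat.add_sub_cancel' hk]
  rw [List.range_eq_range', ← List.range'_append_1, Nat.zero_add]

/-- Recursion (1) of Rautenbach et al.: for `2λ < m - 2`,
`g(t₀,…,t_{m-1}) = g(t₀,…,t_{2λ-1}) ∨ (t₀ ∧ t₂ ∧ … ∧ t_{2λ-2} ∧ g(t_{2λ},…,t_{m-1}))`. -/
theorem aop_recursion_rautenbach (m lam : ℕ) (t : ℕ → Bool) (h : 2 * lam + 2 < m) :
    gA ((List.range m).map t) =
      (gA ((List.range (2 * lam)).map t) ||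
        ((((List.range' 0 lam 2).map t).all id) &&
          gA ((List.range' (2 * lam) (m - 2 * lam)).map t))) := by
  rw [List.range_eq_range'_append_range' (by omega : 2 * lam ≤ m), List.map_append,
    gA_map_range'_append, List.range_eq_range']
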